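/- arXiv:1912.02869 — 13 statements merged into one kernel-verified Lean document; each statement's English description precedes it below -/
import Mathlib

section
/- (a) The function y ↦ y/(1 - exp(-y)) is strictly increasing on (0, ∞); consequently, in Region 2 the equilibrium arrival rate λ1 (the unique positive solution of v - p = λ1/(1 - exp(-λ1))) and in Regions 3 and 4 the arrival rate λ0 (the unique positive solution of v - p - k = λ0/(1 - exp(-λ0))) are strictly increasing in v - p. (b) For every k ≥ 0, the function x ↦ k·exp(-x) + x/(exp(x) - 1) is strictly decreasing on (0, ∞); consequently, if 0 < x1 < x2 and y1, y2 > 0 satisfy k·exp(-x_i) + x_i/(exp(x_i) - 1) = y_i/(1 - exp(-y_i)) for i = 1, 2, then y1 > y2, i.e., in Region 3 the arrival rate λ1 strictly decreases as λ0 (and hence v - p) increases. -/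
private lemma denom_pos {y : ℝ} (hy : 0 < y) : 0 < 1 - Real.exp (-y) := by
  have : Real.exp (-y) < 1 := by
    have := Real.exp_lt_exp.2 (show -y < 0 by linarith)
    simpa using this
  linarith

private lemma denom2_pos {x : ℝ} (hx : 0 < x) : 0 < Real.exp x - 1 := by
  have := Real.add_one_lt_exp (show x ≠ 0 by positivity)
  linarith

private lemma f_hasDeriv {y : ℝ} (hy : 0 < y) :
    HasDerivAt (fun y : ℝ => y / (1 - Real.exp (-y)))
      ((1 * (1 - Real.exp (-y)) - y * Real.exp (-y)) / (1 - Real.exp (-y)) ^ 2) y := by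
  have h1 : HasDerivAt (fun y : ℝ => 1 - Real.exp (-y)) (Real.exp (-y)) y := by
    have h := (Real.hasDerivAt_exp (-y)).comp y (hasDerivAt_neg y)
    simpa [Function.comp_def] using h.const_sub 1
  exact (hasDerivAt_id y).div h1 (ne_of_gt (denom_pos hy))

private lemma g_hasDeriv (k : ℝ) {x : ℝ} (hx : 0 < x) :
    HasDerivAt (fun x : ℝ => k * Real.exp (-x) + x / (Real.exp x - 1))
      (k * (-Real.exp (-x)) + (1 * (Real.exp x - 1) - x * Real.exp x) / (Real.exp x - 1) ^ 2) x := by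
  have he : HasDerivAt (fun x : ℝ => Real.exp (-x)) (-Real.exp (-x)) x := by
    simpa [Function.comp_def] using (Real.hasDerivAt_exp (-x)).comp x (hasDerivAt_neg x)
  have h1 : HasDerivAt (fun x : ℝ => Real.exp x - 1) (Real.exp x) x := by
    simpa using (Real.hasDerivAt_exp x).sub_const 1
  exact (he.const_mul k).add ((hasDerivAt_id x).div h1 (ne_of_gt (denom2_pos hx)))

private lemma f_mono : StrictMonoOn (fun y : ℝ => y / (1 - Real.exp (-y))) (Set.Ioi 0) := by
  apply strictMonoOn_of_deriv_pos (convex_Ioi 0)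
  · intro y hy
    exact ((f_hasDeriv hy).continuousAt).continuousWithinAt
  · intro y hy
    rw [interior_Ioi] at hy
    rw [(f_hasDeriv hy).deriv]
    have h1 := Real.add_one_lt_exp (ne_of_gt hy)
    have h2 := Real.exp_pos (-y)
    have h3 := denom_pos hy
    have hee : Real.exp y * Real.exp (-y) = 1 := by rw [← Real.exp_add]; simp
    apply div_pos
    · nlinarith
    · positivity

private lemma g_anti (k : ℝ) (hk : 0 ≤ k) :
    StrictAntiOn (fun x : ℝ => k * Real.exp (-x) + x / (Real.exp x - 1)) (Set.Ioi 0) := by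
  apply strictAntiOn_of_deriv_neg (convex_Ioi 0)
  · intro x hx
    exact ((g_hasDeriv k hx).continuousAt).continuousWithinAt
  · intro x hx
    rw [interior_Ioi] at hx
    rw [(g_hasDeriv k hx).deriv]
    have h1 := Real.add_one_lt_exp (show (-x) ≠ 0 by simp [ne_of_gt (Set.mem_Ioi.mp hx)])
    have h2 := Real.exp_pos (-x)
    have h3 := denom2_pos hx
    have hex := Real.exp_pos x
    have hee : Real.exp x * Real.exp (-x) = 1 := by
      rw [← Real.exp_add]; simp
    have hnum : 1 * (Real.exp x - 1) - x * Real.exp x < 0 := by nlinarith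
    have hterm : (1 * (Real.exp x - 1) - x * Real.exp x) / (Real.exp x - 1) ^ 2 < 0 :=
      div_neg_of_neg_of_pos hnum (by positivity)
    nlinarith

/-- (a) `y ↦ y/(1 - exp(-y))` is strictly increasing on `(0,∞)`; consequently the
equilibrium arrival rates determined by `s = λ/(1 - exp(-λ))` increase in `s = v - p`
(Region 2 for `λ1`, Regions 3 and 4 for `λ0`).
(b) For `k ≥ 0`, `x ↦ k·exp(-x) + x/(exp x - 1)` is strictly decreasing on `(0,∞)`;
consequently in Region 3, `λ1` strictly decreases as `λ0` increases. -/
theorem stmt0 (k : ℝ) (hk : 0 ≤ k) :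
    StrictMonoOn (fun y : ℝ => y / (1 - Real.exp (-y))) (Set.Ioi 0) ∧
    (∀ s1 s2 l1 l2 : ℝ, s1 < s2 → 0 < l1 → 0 < l2 →
      s1 = l1 / (1 - Real.exp (-l1)) → s2 = l2 / (1 - Real.exp (-l2)) → l1 < l2) ∧
    StrictAntiOn (fun x : ℝ => k * Real.exp (-x) + x / (Real.exp x - 1)) (Set.Ioi 0) ∧
    (∀ x1 x2 y1 y2 : ℝ, 0 < x1 → x1 < x2 → 0 < y1 → 0 < y2 →
      k * Real.exp (-x1) + x1 / (Real.exp x1 - 1) = y1 / (1 - Real.exp (-y1)) →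
      k * Real.exp (-x2) + x2 / (Real.exp x2 - 1) = y2 / (1 - Real.exp (-y2)) →
      y2 < y1) := by
  refine ⟨f_mono, ?_, g_anti k hk, ?_⟩
  · intro s1 s2 l1 l2 hs h1 h2 he1 he2
    by_contra h
    push_neg at h
    have := f_mono.monotoneOn h2 h1 h
    rw [← he1, ← he2] at this
    linarith
  · intro x1 x2 y1 y2 hx1 hx12 hy1 hy2 he1 he2
    have hg := g_anti k hk hx1 (show x2 ∈ Set.Ioi 0 by exact lt_trans hx1 hx12) hx12
    simp only at hg
    rw [he1, he2] at hg
    by_contra h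
    push_neg at h
    have := f_mono.monotoneOn hy1 hy2 h
    linarith
end

section
/- The function h(u) = u - (ln u)/(1 - 1/u) is strictly increasing on (1, ∞), tends to 0 as u → 1⁺, and tends to ∞ as u → ∞. Consequently, for every k > 0 there exists a unique u = u(k) > 1 satisfying k = u - (ln u)/(1 - 1/u). -/
/-! For `u ≠ 0` the function is `u - u * (log u / (u - 1))`, and `log u / (u - 1)` is the slope
of `log` between `1` and `u`: it tends to `log' 1 = 1` as `u → 1⁺` and to `0` as `u → ∞`, which
gives both limits. The derivative is `1 - (u - 1 - log u) / (u - 1) ^ 2`, positive on `(1, ∞)`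
because `log u ≥ 1 - 1 / u`. Existence and uniqueness of `u(k)` then follow from the
intermediate value theorem and strict monotonicity. -/

open Real Filter Set Topology

theorem sub_log_div_one_sub_one_div (u : ℝ) :
    u - log u / (1 - 1 / u) = u - u * (log u / (u - 1)) := by
  rcases eq_or_ne u 0 with rfl | hu
  · simp
  · rw [one_sub_div hu, div_div_eq_mul_div, mul_div_assoc, mul_comm]
    ring

theorem tendsto_log_div_sub_one_nhdsGT_one :
    Tendsto (fun u : ℝ => log u / (u - 1)) (𝓝[>] 1) (𝓝 1) := by
  have h : Tendsto (slope log 1) (𝓝[>] 1) (𝓝 1) := by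
    simpa using (hasDerivAt_iff_tendsto_slope_left_right.mp (hasDerivAt_log one_ne_zero)).2
  exact h.congr fun u => by simp [slope_def_field]

theorem hasDerivAt_sub_mul_log_div_sub_one {u : ℝ} (hu : 1 < u) :
    HasDerivAt (fun u : ℝ => u - u * (log u / (u - 1)))
      (1 - (u - 1 - log u) / (u - 1) ^ 2) u := by
  have hu0 : u ≠ 0 := by positivity
  have hu1 : u - 1 ≠ 0 := by linarith
  refine ((hasDerivAt_id' u).sub ((hasDerivAt_id' u).mul
    ((hasDerivAt_log hu0).div ((hasDerivAt_id' u).sub_const 1) hu1))).congr_deriv ?_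
  simp only [Pi.div_apply]
  field_simp
  ring

theorem sub_one_sub_log_lt_sq {u : ℝ} (hu : 1 < u) : u - 1 - log u < (u - 1) ^ 2 := by
  have hlog := one_sub_inv_le_log_of_pos (by linarith : 0 < u)
  have : u * (u - 1 - log u) ≤ (u - 1) ^ 2 := by
    have : u * u⁻¹ = 1 := by field_simp
    nlinarith
  nlinarith [sq_pos_of_pos (by linarith : 0 < u - 1)]

theorem continuousOn_sub_mul_log_div_sub_one :
    ContinuousOn (fun u : ℝ => u - u * (log u / (u - 1))) (Ioi 1) :=
  HasDerivAt.continuousOn fun _ hu => hasDerivAt_sub_mul_log_div_sub_one hu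

theorem strictMonoOn_sub_mul_log_div_sub_one :
    StrictMonoOn (fun u : ℝ => u - u * (log u / (u - 1))) (Ioi 1) := by
  refine strictMonoOn_of_hasDerivWithinAt_pos (convex_Ioi 1)
    (f' := fun u => 1 - (u - 1 - log u) / (u - 1) ^ 2)
    continuousOn_sub_mul_log_div_sub_one ?_ ?_ <;>
    intro u hu <;> rw [interior_Ioi] at hu
  · exact (hasDerivAt_sub_mul_log_div_sub_one hu).hasDerivWithinAt
  have hsq : 0 < (u - 1) ^ 2 := by have : (0 : ℝ) < u - 1 := sub_pos.2 hu; positivity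
  rw [sub_pos, div_lt_one hsq]
  exact sub_one_sub_log_lt_sq hu

theorem tendsto_sub_mul_log_div_sub_one_nhdsGT_one :
    Tendsto (fun u : ℝ => u - u * (log u / (u - 1))) (𝓝[>] 1) (𝓝 0) := by
  have hid : Tendsto (fun u : ℝ => u) (𝓝[>] 1) (𝓝 1) :=
    tendsto_nhdsWithin_of_tendsto_nhds tendsto_id
  simpa using hid.sub (hid.mul tendsto_log_div_sub_one_nhdsGT_one)

theorem tendsto_sub_mul_log_div_sub_one_atTop :
    Tendsto (fun u : ℝ => u - u * (log u / (u - 1))) atTop atTop := by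
  have hratio : Tendsto (fun u : ℝ => log u / (u - 1)) atTop (𝓝 0) := by
    simpa [sub_eq_add_neg] using tendsto_pow_log_div_mul_add_atTop 1 (-1) 1 one_ne_zero
  have := tendsto_id.atTop_mul_pos one_pos (by simpa using tendsto_const_nhds.sub hratio)
  exact this.congr fun u => by simp only [id]; ring

theorem StrictMonoOn.existsUnique_eq_of_tendsto {f : ℝ → ℝ} {a b k : ℝ}
    (hmono : StrictMonoOn f (Ioi a)) (hcont : ContinuousOn f (Ioi a))
    (hleft : Tendsto f (𝓝[>] a) (𝓝 b)) (htop : Tendsto f atTop atTop) (hk : b < k) :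
    ∃! u, a < u ∧ k = f u := by
  have hright : ∀ᶠ x in 𝓝[>] a, a < x := self_mem_nhdsWithin
  obtain ⟨x, hax, hxk⟩ := (hright.and (hleft.eventually_lt_const hk)).exists
  obtain ⟨y, hxy, hyk⟩ := ((eventually_gt_atTop x).and (htop.eventually_gt_atTop k)).exists
  obtain ⟨u, hu, rfl⟩ := intermediate_value_Ioo hxy.le
    (hcont.mono fun z hz => lt_of_lt_of_le hax hz.1) ⟨hxk, hyk⟩
  have hau : a < u := hax.trans hu.1
  exact ⟨u, ⟨hau, rfl⟩, fun v ⟨hav, hv⟩ => hmono.injOn hav hau hv.symm⟩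

/-- The function `h(u) = u - (ln u)/(1 - 1/u)` is strictly increasing on `(1,∞)`,
tends to `0` as `u → 1⁺`, tends to `∞` as `u → ∞`, and hence for every `k > 0`
there is a unique `u > 1` with `k = u - (ln u)/(1 - 1/u)`. -/
theorem stmt1 :
    StrictMonoOn (fun u : ℝ => u - Real.log u / (1 - 1 / u)) (Set.Ioi 1) ∧
    Filter.Tendsto (fun u : ℝ => u - Real.log u / (1 - 1 / u))
      (nhdsWithin 1 (Set.Ioi 1)) (nhds 0) ∧
    Filter.Tendsto (fun u : ℝ => u - Real.log u / (1 - 1 / u))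
      Filter.atTop Filter.atTop ∧
    (∀ k : ℝ, 0 < k → ∃! u : ℝ, 1 < u ∧ k = u - Real.log u / (1 - 1 / u)) := by
  simp only [sub_log_div_one_sub_one_div]
  exact ⟨strictMonoOn_sub_mul_log_div_sub_one, tendsto_sub_mul_log_div_sub_one_nhdsGT_one,
    tendsto_sub_mul_log_div_sub_one_atTop, fun k hk =>
      strictMonoOn_sub_mul_log_div_sub_one.existsUnique_eq_of_tendsto
        continuousOn_sub_mul_log_div_sub_one
        tendsto_sub_mul_log_div_sub_one_nhdsGT_one tendsto_sub_mul_log_div_sub_one_atTop hk⟩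
end

section
/- Let v0 > 1 and let R(v0) denote the unique real number r with -1 ≤ r < 0 satisfying r·exp(r) = -v0·exp(-v0). Then x = v0 + R(v0) is positive and is the unique positive solution of the equation v0 = x/(1 - exp(-x)). -/
/-!
Writing `a = x - v0`, the equation `v0 (1 - e^{-x}) = x` becomes `a = -v0 e^{-x}`, and multiplying
by `e^{a}` turns it into `a e^{a} = -v0 e^{-v0}`. Solutions with `x > 0` have `v0 e^{-x} ≤ 1`
(because `x ≤ e^x - 1`), i.e. `a ≥ -1`, and `t ↦ t e^t` is injective on `[-1, ∞)`; hence `a = r`.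
-/

open Real Set

lemma strictMonoOn_mul_exp : StrictMonoOn (fun t : ℝ => t * exp t) (Ici (-1)) := by
  apply strictMonoOn_of_deriv_pos (convex_Ici _)
  · fun_prop
  · intro t ht
    rw [interior_Ici, mem_Ioi] at ht
    have hderiv : HasDerivAt (fun t : ℝ => t * exp t) (1 * exp t + t * exp t) t :=
      (hasDerivAt_id t).mul (hasDerivAt_exp t)
    rw [hderiv.deriv]
    nlinarith [exp_pos t]

lemma mul_exp_eq_neg_mul_exp_neg_iff (a v : ℝ) :
    a * exp a = -v * exp (-v) ↔ a = -(v * exp (-(v + a))) := by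
  have hsplit : exp (-v) = exp (-(v + a)) * exp a := by rw [← exp_add]; ring_nf
  rw [hsplit, ← mul_assoc, mul_left_inj' (exp_pos a).ne']
  ring_nf

lemma eq_div_one_sub_exp_neg_iff {v x : ℝ} (hx : 0 < x) :
    v = x / (1 - exp (-x)) ↔ x - v = -(v * exp (-x)) := by
  have hden : 1 - exp (-x) ≠ 0 := by
    have : exp (-x) < 1 := exp_lt_one_iff.mpr (neg_neg_of_pos hx)
    linarith
  rw [eq_div_iff hden]
  constructor <;> intro h <;> linarith

lemma mul_exp_neg_le_one_of_sub_eq {v x : ℝ} (hx : 0 < x) (h : x - v = -(v * exp (-x))) :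
    v * exp (-x) ≤ 1 := by
  have hexp : exp (-x) * exp x = 1 := by rw [← exp_add]; simp
  have hpos : 0 < exp x - 1 := by linarith [add_one_lt_exp hx.ne']
  have hmul : v * exp (-x) * (exp x - 1) = x := by linear_combination v * hexp - h
  nlinarith [add_one_le_exp x]

theorem stmt2_general (v0 r : ℝ) (hv0 : 1 < v0) (hr1 : -1 ≤ r)
    (hre : r * Real.exp r = -v0 * Real.exp (-v0)) :
    0 < v0 + r ∧
    v0 = (v0 + r) / (1 - Real.exp (-(v0 + r))) ∧
    (∀ x : ℝ, 0 < x → v0 = x / (1 - Real.exp (-x)) → x = v0 + r) := by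
  have hx : 0 < v0 + r := by linarith
  refine ⟨hx, ?_, fun x hx0 hxv => ?_⟩
  · rw [eq_div_one_sub_exp_neg_iff hx, add_sub_cancel_left]
    exact (mul_exp_eq_neg_mul_exp_neg_iff r v0).mp hre
  · have hsub := (eq_div_one_sub_exp_neg_iff hx0).mp hxv
    have hge : -1 ≤ x - v0 := by linarith [mul_exp_neg_le_one_of_sub_eq hx0 hsub]
    have hre' : (x - v0) * exp (x - v0) = -v0 * exp (-v0) := by
      rwa [mul_exp_eq_neg_mul_exp_neg_iff, add_sub_cancel]
    have := strictMonoOn_mul_exp.injOn hge hr1 (hre'.trans hre.symm)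
    linarith

/-- For `v0 > 1`, with `r = R(v0)` (the value in `[-1, 0)` with `r·eʳ = -v0·e^{-v0}`),
`x = v0 + r` is positive and is the unique positive solution of
`v0 = x/(1 - exp(-x))`. -/
theorem stmt2 (v0 r : ℝ) (hv0 : 1 < v0) (hr1 : -1 ≤ r) (hr2 : r < 0)
    (hre : r * Real.exp r = -v0 * Real.exp (-v0)) :
    0 < v0 + r ∧
    v0 = (v0 + r) / (1 - Real.exp (-(v0 + r))) ∧
    (∀ x : ℝ, 0 < x → v0 = x / (1 - Real.exp (-x)) → x = v0 + r) :=
  stmt2_general v0 r hv0 hr1 hre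
end

section
/- Let k > 0 and suppose 1 < v0 < v0' < u(k) - k. Let (x, y) be the pair of positive reals solving v0 = x/(1 - exp(-x)) and v0 + k = y·exp(x)/(1 - exp(-y)), and let (x', y') be the pair of positive reals solving the same system with v0 replaced by v0'. Then x + y > x' + y'. That is, in Region 3 the aggregate arrival rate λ0 + λ1 strictly decreases in v0 = v - p - k (equivalently, in the surplus v - p). -/
open Real Set

/-- Derivative of `f t = t / (1 - exp (-t))`. -/
private lemma hasDerivAt_f {t : ℝ} (ht : 1 - Real.exp (-t) ≠ 0) :
    HasDerivAt (fun u : ℝ => u / (1 - Real.exp (-u)))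
      ((1 - Real.exp (-t) - t * Real.exp (-t)) / (1 - Real.exp (-t)) ^ 2) t := by
  have h1 : HasDerivAt (fun u : ℝ => Real.exp (-u)) (-Real.exp (-t)) t := by
    simpa [Function.comp_def] using (Real.hasDerivAt_exp (-t)).comp t (hasDerivAt_neg t)
  have hexp : HasDerivAt (fun u : ℝ => 1 - Real.exp (-u)) (Real.exp (-t)) t := by
    simpa using h1.const_sub 1
  have := (hasDerivAt_id t).div hexp ht
  simpa [Pi.div_def] using this

private lemma denom_pos_s4 {t : ℝ} (ht : 0 < t) : 0 < 1 - Real.exp (-t) := by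
  have : Real.exp (-t) < 1 := Real.exp_lt_one_iff.mpr (by linarith)
  linarith

/-- `f` is strictly monotone on `(0, ∞)`. -/
private lemma f_strictMono : StrictMonoOn (fun u : ℝ => u / (1 - Real.exp (-u))) (Ioi 0) := by
  apply strictMonoOn_of_deriv_pos (convex_Ioi 0)
  · apply ContinuousOn.div continuousOn_id
    · exact (continuous_const.sub (Real.continuous_exp.comp continuous_neg)).continuousOn
    · intro t ht
      exact (denom_pos_s4 ht).ne'
  · intro t ht
    rw [interior_Ioi] at ht
    have hd := denom_pos_s4 ht
    rw [(hasDerivAt_f hd.ne').deriv]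
    apply div_pos _ (by positivity)
    have h1 : t + 1 < Real.exp t := Real.add_one_lt_exp ht.ne'
    have h2 : Real.exp (-t) * Real.exp t = 1 := by
      rw [← Real.exp_add]; simp
    nlinarith [Real.exp_pos (-t), Real.exp_pos t]

/-- Key inequality A: `s > (1 - e^{-s}) + (1 - e^{-s})^2 / 2` for `s > 0`. -/
private lemma keyA {s : ℝ} (hs : 0 < s) :
    1 - Real.exp (-s) + (1 - Real.exp (-s)) ^ 2 / 2 < s := by
  have mono : StrictMonoOn
      (fun u : ℝ => u - 3 / 2 + 2 * Real.exp (-u) - Real.exp (-u) ^ 2 / 2) (Ici 0) := by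
    apply strictMonoOn_of_deriv_pos (convex_Ici 0)
    · fun_prop
    · intro u hu
      rw [interior_Ici] at hu
      have hu' : 0 < u := hu
      have h1 : HasDerivAt (fun u : ℝ => Real.exp (-u)) (-Real.exp (-u)) u := by
        simpa [Function.comp_def] using (Real.hasDerivAt_exp (-u)).comp u (hasDerivAt_neg u)
      have hD : HasDerivAt (fun u : ℝ => u - 3 / 2 + 2 * Real.exp (-u) - Real.exp (-u) ^ 2 / 2)
          (1 + 2 * (-Real.exp (-u)) - Real.exp (-u) * (-Real.exp (-u))) u := by
        have := (((hasDerivAt_id u).sub_const (3 / 2)).add (h1.const_mul 2)).sub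
          ((h1.pow 2).div_const 2)
        exact this.congr_deriv (by norm_num <;> ring)
        try ring
      rw [hD.deriv]
      have hlt : Real.exp (-u) < 1 := Real.exp_lt_one_iff.mpr (by linarith)
      have hsq : 0 < (1 - Real.exp (-u)) ^ 2 := pow_pos (by linarith) 2
      nlinarith [Real.exp_pos (-u)]
  have h0 : (fun u : ℝ => u - 3 / 2 + 2 * Real.exp (-u) - Real.exp (-u) ^ 2 / 2) 0 <
      (fun u : ℝ => u - 3 / 2 + 2 * Real.exp (-u) - Real.exp (-u) ^ 2 / 2) s :=
    mono (self_mem_Ici) (le_of_lt hs) hs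
  simp only [neg_zero, Real.exp_zero] at h0
  nlinarith [h0]

/-- Key inequality A': `f s - f' s > 1/2` for `s > 0`. -/
private lemma keyA' {s : ℝ} (hs : 0 < s) :
    1 / 2 < s / (1 - Real.exp (-s)) -
      (1 - Real.exp (-s) - s * Real.exp (-s)) / (1 - Real.exp (-s)) ^ 2 := by
  have hd := denom_pos_s4 hs
  have hA := keyA hs
  have hEq : s / (1 - Real.exp (-s)) -
      (1 - Real.exp (-s) - s * Real.exp (-s)) / (1 - Real.exp (-s)) ^ 2
      = (s - (1 - Real.exp (-s))) / (1 - Real.exp (-s)) ^ 2 := by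
    field_simp
    ring
  rw [hEq, lt_div_iff₀ (by positivity)]
  nlinarith

/-- Key inequality B: `f' t < e^t / 2` for `t > 0`. -/
private lemma keyB {t : ℝ} (ht : 0 < t) :
    (1 - Real.exp (-t) - t * Real.exp (-t)) / (1 - Real.exp (-t)) ^ 2 < Real.exp t / 2 := by
  have hd := denom_pos_s4 ht
  have mono : StrictMonoOn
      (fun u : ℝ => 1 - 4 * Real.exp (-u) + 3 * Real.exp (-u) ^ 2 + 2 * u * Real.exp (-u) ^ 2)
      (Ici 0) := by
    apply strictMonoOn_of_deriv_pos (convex_Ici 0)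
    · fun_prop
    · intro u hu
      rw [interior_Ici] at hu
      have hu' : 0 < u := hu
      have h1 : HasDerivAt (fun u : ℝ => Real.exp (-u)) (-Real.exp (-u)) u := by
        simpa [Function.comp_def] using (Real.hasDerivAt_exp (-u)).comp u (hasDerivAt_neg u)
      have h2 : HasDerivAt (fun u : ℝ => Real.exp (-u) ^ 2)
          (2 * Real.exp (-u) * (-Real.exp (-u))) u := by
        simpa [Pi.pow_def] using h1.pow 2
      have hD : HasDerivAt
          (fun u : ℝ => 1 - 4 * Real.exp (-u) + 3 * Real.exp (-u) ^ 2
            + 2 * u * Real.exp (-u) ^ 2)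
          (-(4 * -Real.exp (-u)) + 3 * (2 * Real.exp (-u) * (-Real.exp (-u)))
            + (2 * Real.exp (-u) ^ 2 + 2 * u * (2 * Real.exp (-u) * (-Real.exp (-u))))) u := by
        have hc : HasDerivAt (fun u : ℝ => 2 * u) 2 u := by
          simpa using (hasDerivAt_id u).const_mul 2
        have := (((h1.const_mul 4).const_sub 1).add (h2.const_mul 3)).add (hc.mul h2)
        exact this
        try ring
      rw [hD.deriv]
      have h3 : u + 1 < Real.exp u := Real.add_one_lt_exp hu'.ne'
      have h4 : Real.exp (-u) * Real.exp u = 1 := by rw [← Real.exp_add]; simp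
      have h6 : Real.exp (-u) ^ 2 * Real.exp u = Real.exp (-u) := by
        rw [sq, mul_assoc, h4, mul_one]
      have h5 : 0 < Real.exp (-u) ^ 2 * (Real.exp u - 1 - u) :=
        mul_pos (pow_pos (Real.exp_pos (-u)) 2) (by linarith)
      nlinarith [h5, h6]
  have h0 : (0:ℝ) < 1 - 4 * Real.exp (-t) + 3 * Real.exp (-t) ^ 2
      + 2 * t * Real.exp (-t) ^ 2 := by
    have := mono (self_mem_Ici) (le_of_lt ht) ht
    simp only [neg_zero, Real.exp_zero] at this
    nlinarith [this]
  rw [div_lt_div_iff₀ (by positivity) (by norm_num : (0:ℝ) < 2)]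
  have h4 : Real.exp (-t) * Real.exp t = 1 := by rw [← Real.exp_add]; simp
  nlinarith [Real.exp_pos (-t), Real.exp_pos t]

/-- In Region 3, the aggregate arrival rate `λ0 + λ1` strictly decreases in
`v0 = v - p - k`: if `1 < v0 < v0' < u(k) - k` and `(x, y)`, `(x', y')` are the
positive solutions of the Region-3 equilibrium system for `v0` and `v0'`
respectively, then `x + y > x' + y'`. -/
theorem stmt4 (k u v0 v0' x y x' y' : ℝ) (hk : 0 < k) (hu : 1 < u)
    (huk : k = u - Real.log u / (1 - 1 / u))
    (h1 : 1 < v0) (h2 : v0 < v0') (h3 : v0' < u - k)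
    (hx : 0 < x) (hy : 0 < y)
    (hex : v0 = x / (1 - Real.exp (-x)))
    (hey : v0 + k = y * Real.exp x / (1 - Real.exp (-y)))
    (hx' : 0 < x') (hy' : 0 < y')
    (hex' : v0' = x' / (1 - Real.exp (-x')))
    (hey' : v0' + k = y' * Real.exp x' / (1 - Real.exp (-y'))) :
    x' + y' < x + y := by
  have hdx := denom_pos_s4 hx
  have hdx' := denom_pos_s4 hx'
  have hdy := denom_pos_s4 hy
  have hdy' := denom_pos_s4 hy'
  -- x < x'
  have hxx' : x < x' := by
    by_contra h
    push_neg at h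
    rcases eq_or_lt_of_le h with heq | hlt
    · rw [heq] at hex'
      rw [← hex'] at hex
      linarith
    · have := f_strictMono (mem_Ioi.mpr hx') (mem_Ioi.mpr hx) hlt
      simp only at this
      rw [← hex, ← hex'] at this
      linarith
  set c := x' + y' with hc
  -- ψ is strictly monotone on [x, x']
  set ψ : ℝ → ℝ := fun t =>
    (c - t) / (1 - Real.exp (-(c - t))) * Real.exp t - t / (1 - Real.exp (-t)) with hψ
  have hspos : ∀ t ∈ Icc x x', 0 < c - t := fun t htm => by
    have := htm.2
    simp only [hc]
    linarith
  have htpos : ∀ t ∈ Icc x x', 0 < t := fun t htm => lt_of_lt_of_le hx htm.1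
  have hmono : StrictMonoOn ψ (Icc x x') := by
    apply strictMonoOn_of_deriv_pos (convex_Icc x x')
    · apply ContinuousOn.sub
      · apply ContinuousOn.mul _ (Real.continuous_exp.continuousOn)
        apply ContinuousOn.div
        · fun_prop
        · fun_prop
        · intro t htm
          exact (denom_pos_s4 (hspos t htm)).ne'
      · apply ContinuousOn.div continuousOn_id
        · fun_prop
        · intro t htm
          exact (denom_pos_s4 (htpos t htm)).ne'
    · intro t htm
      rw [interior_Icc] at htm
      have ht0 : 0 < t := htpos t (Ioo_subset_Icc_self htm)
      have hs0 : 0 < c - t := hspos t (Ioo_subset_Icc_self htm)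
      set s := c - t with hsdef
      have hds := denom_pos_s4 hs0
      have hdt := denom_pos_s4 ht0
      -- derivative of ψ
      have hcomp : HasDerivAt (fun u : ℝ => (c - u) / (1 - Real.exp (-(c - u))))
          ((1 - Real.exp (-s) - s * Real.exp (-s)) / (1 - Real.exp (-s)) ^ 2 * (-1)) t := by
        exact (hasDerivAt_f hds.ne').comp t ((hasDerivAt_id t).const_sub c)
      have hD : HasDerivAt ψ
          ((1 - Real.exp (-s) - s * Real.exp (-s)) / (1 - Real.exp (-s)) ^ 2 * (-1) * Real.exp t
            + s / (1 - Real.exp (-s)) * Real.exp t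
            - (1 - Real.exp (-t) - t * Real.exp (-t)) / (1 - Real.exp (-t)) ^ 2) t := by
        exact (hcomp.mul (Real.hasDerivAt_exp t)).sub (hasDerivAt_f hdt.ne')
      rw [hD.deriv]
      have hA := keyA' hs0
      have hB := keyB ht0
      nlinarith [Real.exp_pos t,
        mul_pos (Real.exp_pos t)
          (by linarith : (0:ℝ) < s / (1 - Real.exp (-s)) -
            (1 - Real.exp (-s) - s * Real.exp (-s)) / (1 - Real.exp (-s)) ^ 2 - 1 / 2)]
  have hlt : ψ x < ψ x' :=
    hmono (left_mem_Icc.mpr hxx'.le) (right_mem_Icc.mpr hxx'.le) hxx'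
  -- ψ x' = k
  have hcx' : c - x' = y' := by simp [hc]
  have hψx' : ψ x' = k := by
    simp only [hψ, hcx']
    have : y' / (1 - Real.exp (-y')) * Real.exp x' = y' * Real.exp x' / (1 - Real.exp (-y')) := by
      ring
    rw [this, ← hey', ← hex']
    ring
  -- ψ x < k gives f (c - x) < f y
  have hk2 : y / (1 - Real.exp (-y)) * Real.exp x - x / (1 - Real.exp (-x)) = k := by
    have : y / (1 - Real.exp (-y)) * Real.exp x = y * Real.exp x / (1 - Real.exp (-y)) := by
      ring
    rw [this, ← hey, ← hex]
    ring
  have hfineq : (c - x) / (1 - Real.exp (-(c - x))) * Real.exp x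
      < y / (1 - Real.exp (-y)) * Real.exp x := by
    have hψx : ψ x = (c - x) / (1 - Real.exp (-(c - x))) * Real.exp x
        - x / (1 - Real.exp (-x)) := rfl
    rw [hψx'] at hlt
    rw [hψx] at hlt
    linarith
  have hf : (c - x) / (1 - Real.exp (-(c - x))) < y / (1 - Real.exp (-y)) :=
    lt_of_mul_lt_mul_right (by linarith) (Real.exp_pos x).le
  have hcx0 : 0 < c - x := by simp only [hc]; linarith
  have : c - x < y := by
    by_contra h
    push_neg at h
    rcases eq_or_lt_of_le h with heq | hlt2
    · rw [← heq] at hf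
      linarith
    · have := f_strictMono (mem_Ioi.mpr hy) (mem_Ioi.mpr hcx0) hlt2
      simp only at this
      linarith
  linarith
end

section
/- Let k > 0 and v > 0, and let 0 ≤ p1 < p2 be prices such that 1 < v - p_i - k < u(k) - k for i = 1, 2. For i = 1, 2 let (x_i, y_i) be the pair of positive reals solving v - p_i - k = x_i/(1 - exp(-x_i)) and v - p_i = y_i·exp(x_i)/(1 - exp(-y_i)). Then p1·(1 - exp(-(x1 + y1))) < p2·(1 - exp(-(x2 + y2))). That is, the firm's expected profit π(p) = p·(1 - exp(-(λ0 + λ1))) strictly increases in p throughout Region 3. -/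
/-!
Write `f t = t / (1 - e^{-t})`. The equilibrium equations read `f x = v - p - k` and
`f y · e^x = v - p`, so a higher price means a smaller `x` (as `f` is increasing) at a fixed value
`K(x, y) = f y · e^x - f x = k`. On each line `x + y = s` the function `K` increases with `x`,
because `f' t ≤ e^t / 2` and `f - f' > 1/2`, both consequences of `log (1 + a) > 2a / (a + 2)`.
Since `K` also increases with `y`, keeping `K = k` while lowering `x` forces `x + y` up, so the
higher price also comes with a higher probability `1 - e^{-(x + y)}` of a sale.
-/

open Real Set

/-- `λ / (1 - e^{-λ})`, the mean of a zero-truncated Poisson variable of parameter `λ`. -/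
noncomputable def truncPoissonMean (t : ℝ) : ℝ := t / (1 - exp (-t))

lemma truncPoissonMean_eq_mul_exp_div {t : ℝ} (ht : 0 < t) :
    truncPoissonMean t = t * exp t / (exp t - 1) := by
  have hb : 0 < exp t - 1 := by linarith [add_one_lt_exp ht.ne']
  rw [truncPoissonMean, exp_neg]
  field_simp

lemma hasDerivAt_truncPoissonMean {t : ℝ} (ht : 0 < t) :
    HasDerivAt truncPoissonMean (exp t * (exp t - 1 - t) / (exp t - 1) ^ 2) t := by
  have hz : 1 - exp (-t) ≠ 0 := (sub_pos.2 (exp_lt_one_iff.2 (neg_neg_of_pos ht))).ne'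
  have hb : exp t - 1 ≠ 0 := by linarith [add_one_lt_exp ht.ne']
  have h := (hasDerivAt_id t).div ((hasDerivAt_neg t).exp.const_sub 1) hz
  refine h.congr_deriv ?_
  simp only [id_eq, exp_neg]
  field_simp

lemma deriv_truncPoissonMean_le {t : ℝ} (ht : 0 < t) :
    deriv truncPoissonMean t ≤ exp t / 2 := by
  rw [(hasDerivAt_truncPoissonMean ht).deriv]
  obtain ⟨x, hx, rfl⟩ : ∃ x, 0 < x ∧ t = log (1 + x) :=
    ⟨exp t - 1, by linarith [add_one_lt_exp ht.ne'], by simp⟩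
  have hlog := (div_lt_iff₀ (by linarith)).1 (lt_log_one_add_of_pos hx)
  rw [exp_log (by linarith), show 1 + x - 1 = x by ring, div_le_div_iff₀ (by positivity) two_pos]
  ring_nf
  nlinarith [sq_nonneg x, mul_pos hx hx]

lemma half_lt_truncPoissonMean_sub_deriv {t : ℝ} (ht : 0 < t) :
    1 / 2 < truncPoissonMean t - deriv truncPoissonMean t := by
  rw [(hasDerivAt_truncPoissonMean ht).deriv, truncPoissonMean_eq_mul_exp_div ht]
  obtain ⟨x, hx, rfl⟩ : ∃ x, 0 < x ∧ t = log (1 + x) :=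
    ⟨exp t - 1, by linarith [add_one_lt_exp ht.ne'], by simp⟩
  have hlog := (div_lt_iff₀ (by linarith)).1 (lt_log_one_add_of_pos hx)
  rw [exp_log (by linarith), show 1 + x - 1 = x by ring]
  rw [show log (1 + x) * (1 + x) / x - (1 + x) * (x - log (1 + x)) / x ^ 2
    = (1 + x) * (log (1 + x) * (1 + x) - x) / x ^ 2 by field_simp; ring]
  rw [div_lt_div_iff₀ two_pos (by positivity)]
  nlinarith [sq_nonneg x, mul_pos hx hx]

lemma deriv_truncPoissonMean_pos {t : ℝ} (ht : 0 < t) : 0 < deriv truncPoissonMean t := by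
  have hb : 1 + t < exp t := by linarith [add_one_lt_exp ht.ne']
  rw [(hasDerivAt_truncPoissonMean ht).deriv]
  have : 0 < exp t - 1 - t := by linarith
  have : 0 < exp t - 1 := by linarith
  positivity

lemma strictMonoOn_truncPoissonMean : StrictMonoOn truncPoissonMean (Ioi 0) :=
  strictMonoOn_of_deriv_pos (convex_Ioi 0)
    (fun _ ht => (hasDerivAt_truncPoissonMean ht).continuousAt.continuousWithinAt)
    (fun _ ht => deriv_truncPoissonMean_pos (by rwa [interior_Ioi] at ht))

/-- Subtracting the two equilibrium equations, the rates `λ0 = x`, `λ1 = y` force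
`k = impliedPenalty x y`. -/
noncomputable def impliedPenalty (x y : ℝ) : ℝ :=
  truncPoissonMean y * exp x - truncPoissonMean x

lemma strictMonoOn_impliedPenalty_antidiagonal (s : ℝ) :
    StrictMonoOn (fun t => impliedPenalty t (s - t)) (Ioo 0 s) := by
  set f := truncPoissonMean
  have hderiv : ∀ t ∈ Ioo 0 s, HasDerivAt (fun t => impliedPenalty t (s - t))
      (-deriv f (s - t) * exp t + f (s - t) * exp t - deriv f t) t := by
    intro t ⟨ht, hts⟩
    have hf : ∀ {r : ℝ}, 0 < r → HasDerivAt f (deriv f r) r :=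
      fun hr => (hasDerivAt_truncPoissonMean hr).differentiableAt.hasDerivAt
    have hfs := (hf (sub_pos.2 hts)).comp t ((hasDerivAt_id t).const_sub s)
    exact ((hfs.mul (hasDerivAt_exp t)).sub (hf ht)).congr_deriv
      (by simp only [Function.comp_apply]; ring)
  refine strictMonoOn_of_hasDerivWithinAt_pos (convex_Ioo 0 s)
    (fun t ht => (hderiv t ht).continuousAt.continuousWithinAt)
    (fun t ht => (hderiv t (interior_subset ht)).hasDerivWithinAt) ?_
  rw [interior_Ioo]
  rintro t ⟨ht, hts⟩
  -- `f' t ≤ e^t / 2 < e^t (f - f')(s - t)`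
  have hle := deriv_truncPoissonMean_le ht
  have hlt := half_lt_truncPoissonMean_sub_deriv (sub_pos.2 hts)
  nlinarith [exp_pos t]

lemma add_lt_add_of_impliedPenalty_eq {x₁ y₁ x₂ y₂ : ℝ} (hx₂ : 0 < x₂) (hx : x₂ < x₁)
    (hy₁ : 0 < y₁) (hy₂ : 0 < y₂) (h : impliedPenalty x₁ y₁ = impliedPenalty x₂ y₂) :
    x₁ + y₁ < x₂ + y₂ := by
  by_contra! hs
  set s := x₁ + y₁
  have hmono : impliedPenalty x₂ y₂ ≤ impliedPenalty x₂ (s - x₂) := by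
    have : truncPoissonMean y₂ ≤ truncPoissonMean (s - x₂) :=
      strictMonoOn_truncPoissonMean.monotoneOn hy₂ (show 0 < s - x₂ by linarith) (by linarith)
    unfold impliedPenalty
    gcongr
  have hshift : impliedPenalty x₂ (s - x₂) < impliedPenalty x₁ (s - x₁) :=
    strictMonoOn_impliedPenalty_antidiagonal s ⟨hx₂, by linarith⟩ ⟨by linarith, by linarith⟩ hx
  rw [show s - x₁ = y₁ by ring] at hshift
  linarith

lemma impliedPenalty_eq {k v p x y : ℝ} (he : v - p - k = x / (1 - exp (-x)))
    (he' : v - p = y * exp x / (1 - exp (-y))) : impliedPenalty x y = k := by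
  rw [impliedPenalty, truncPoissonMean, truncPoissonMean, ← he, div_mul_eq_mul_div, ← he']
  ring

theorem stmt5_general (k v p1 p2 x1 y1 x2 y2 : ℝ)
    (hp1 : 0 ≤ p1) (hp12 : p1 < p2)
    (hx1 : 0 < x1) (hy1 : 0 < y1)
    (he1 : v - p1 - k = x1 / (1 - Real.exp (-x1)))
    (he1' : v - p1 = y1 * Real.exp x1 / (1 - Real.exp (-y1)))
    (hx2 : 0 < x2) (hy2 : 0 < y2)
    (he2 : v - p2 - k = x2 / (1 - Real.exp (-x2)))
    (he2' : v - p2 = y2 * Real.exp x2 / (1 - Real.exp (-y2))) :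
    p1 * (1 - Real.exp (-(x1 + y1))) < p2 * (1 - Real.exp (-(x2 + y2))) := by
  have hx : x2 < x1 := by
    refine (strictMonoOn_truncPoissonMean.lt_iff_lt hx2 hx1).1 ?_
    rw [truncPoissonMean, truncPoissonMean, ← he1, ← he2]
    linarith
  have hsum : x1 + y1 < x2 + y2 := add_lt_add_of_impliedPenalty_eq hx2 hx hy1 hy2
    ((impliedPenalty_eq he1 he1').trans (impliedPenalty_eq he2 he2').symm)
  have hpos : 0 < 1 - exp (-(x2 + y2)) := sub_pos.2 (exp_lt_one_iff.2 (by linarith))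
  calc p1 * (1 - exp (-(x1 + y1))) ≤ p1 * (1 - exp (-(x2 + y2))) := by gcongr
    _ < p2 * (1 - exp (-(x2 + y2))) := by gcongr

/-- The firm's expected profit `π(p) = p·(1 - exp(-(λ0 + λ1)))` strictly increases
in `p` throughout Region 3. -/
theorem stmt5 (k u v p1 p2 x1 y1 x2 y2 : ℝ) (hk : 0 < k) (hv : 0 < v) (hu : 1 < u)
    (huk : k = u - Real.log u / (1 - 1 / u))
    (hp1 : 0 ≤ p1) (hp12 : p1 < p2)
    (hr1 : 1 < v - p1 - k) (hr1' : v - p1 - k < u - k)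
    (hr2 : 1 < v - p2 - k) (hr2' : v - p2 - k < u - k)
    (hx1 : 0 < x1) (hy1 : 0 < y1)
    (he1 : v - p1 - k = x1 / (1 - Real.exp (-x1)))
    (he1' : v - p1 = y1 * Real.exp x1 / (1 - Real.exp (-y1)))
    (hx2 : 0 < x2) (hy2 : 0 < y2)
    (he2 : v - p2 - k = x2 / (1 - Real.exp (-x2)))
    (he2' : v - p2 = y2 * Real.exp x2 / (1 - Real.exp (-y2))) :
    p1 * (1 - Real.exp (-(x1 + y1))) < p2 * (1 - Real.exp (-(x2 + y2))) :=
  stmt5_general k v p1 p2 x1 y1 x2 y2 hp1 hp12 hx1 hy1 he1 he1' hx2 hy2 he2 he2'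
end

section
/- Let k > 0 and let w_k be the unique real number w with -1 ≤ w < 0 satisfying w·exp(w) = -(k+1)·exp(-(k+1)). Then for every v > 0, (v - k - 1)·(1 - exp(-(w_k + k + 1))) ≤ v - 1 - ln v, with equality exactly at v = exp(w_k + k + 1). That is, the border profit π3 never exceeds the Region-2 optimal profit π2 = v - 1 - ln v. -/
/-!
Put `c = exp (-(w + k + 1))`. The equation defining `w` says exactly that `(k + 1) c = -w`,
and with it the difference `π2 - π3` collapses to `g (v c)` with `g t = t - 1 - log t`.
Since `g ≥ 0` on `(0, ∞)` and vanishes only at `t = 1`, the inequality holds, with equality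
iff `v c = 1`, i.e. `v = exp (w + k + 1)`.
-/

open Real

lemma Real.log_eq_sub_one_iff {t : ℝ} (ht : 0 < t) : log t = t - 1 ↔ t = 1 :=
  ⟨fun h => by_contra fun h1 => (log_lt_sub_one_of_pos ht h1).ne h, fun h => by simp [h]⟩

lemma mul_exp_neg_add_eq_neg {a w : ℝ} (hwe : w * exp w = -a * exp (-a)) :
    a * exp (-(w + a)) = -w := by
  calc a * exp (-(w + a)) = a * exp (-a) * exp (-w) := by rw [mul_assoc, ← exp_add]; ring_nf
    _ = -w * (exp w * exp (-w)) := by linear_combination exp (-w) * hwe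
    _ = -w := by rw [← exp_add, add_neg_cancel, exp_zero, mul_one]

lemma sub_one_sub_log_sub_eq {a w v : ℝ} (hc : a * exp (-(w + a)) = -w) (hv : 0 < v) :
    v - 1 - log v - (v - a) * (1 - exp (-(w + a))) =
      v * exp (-(w + a)) - 1 - log (v * exp (-(w + a))) := by
  rw [log_mul hv.ne' (exp_ne_zero _), log_exp]
  linear_combination -hc

lemma mul_exp_neg_eq_one_iff {v x : ℝ} : v * exp (-x) = 1 ↔ v = exp x := by
  rw [exp_neg, mul_inv_eq_one₀ (exp_ne_zero x)]

theorem sub_mul_one_sub_exp_neg_le_sub_one_sub_log {a w : ℝ}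
    (hwe : w * exp w = -a * exp (-a)) :
    (∀ v : ℝ, 0 < v → (v - a) * (1 - exp (-(w + a))) ≤ v - 1 - log v) ∧
    (∀ v : ℝ, 0 < v →
      ((v - a) * (1 - exp (-(w + a))) = v - 1 - log v ↔ v = exp (w + a))) := by
  have hc := mul_exp_neg_add_eq_neg hwe
  have hvc {v : ℝ} (hv : 0 < v) : 0 < v * exp (-(w + a)) := mul_pos hv (exp_pos _)
  refine ⟨fun v hv => ?_, fun v hv => ?_⟩
  · have hgap := sub_one_sub_log_sub_eq hc hv
    linarith [log_le_sub_one_of_pos (hvc hv)]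
  · have hgap := sub_one_sub_log_sub_eq hc hv
    rw [← mul_exp_neg_eq_one_iff, ← log_eq_sub_one_iff (hvc hv)]
    constructor <;> intro h <;> linarith

theorem stmt9_general (k w : ℝ)
    (hwe : w * Real.exp w = -(k + 1) * Real.exp (-(k + 1))) :
    (∀ v : ℝ, 0 < v →
      (v - k - 1) * (1 - Real.exp (-(w + k + 1))) ≤ v - 1 - Real.log v) ∧
    (∀ v : ℝ, 0 < v →
      ((v - k - 1) * (1 - Real.exp (-(w + k + 1))) = v - 1 - Real.log v ↔
        v = Real.exp (w + k + 1))) := by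
  have hv (v : ℝ) : v - k - 1 = v - (k + 1) := by ring
  have hw : w + k + 1 = w + (k + 1) := by ring
  simp only [hv, hw]
  exact sub_mul_one_sub_exp_neg_le_sub_one_sub_log hwe

/-- With `w = w_k` the value in `[-1, 0)` satisfying `w·eʷ = -(k+1)·e^{-(k+1)}`,
for every `v > 0` the border profit `π3 = (v-k-1)·(1 - exp(-(w+k+1)))` never
exceeds `π2 = v - 1 - ln v`, with equality exactly at `v = exp(w + k + 1)`. -/
theorem stmt9 (k w : ℝ) (hk : 0 < k) (hw1 : -1 ≤ w) (hw2 : w < 0)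
    (hwe : w * Real.exp w = -(k + 1) * Real.exp (-(k + 1))) :
    (∀ v : ℝ, 0 < v →
      (v - k - 1) * (1 - Real.exp (-(w + k + 1))) ≤ v - 1 - Real.log v) ∧
    (∀ v : ℝ, 0 < v →
      ((v - k - 1) * (1 - Real.exp (-(w + k + 1))) = v - 1 - Real.log v ↔
        v = Real.exp (w + k + 1))) :=
  stmt9_general k w hwe
end

section
/- Let k > 0 and let w_k be the unique real number w with -1 ≤ w < 0 satisfying w·exp(w) = -(k+1)·exp(-(k+1)). If 1 < v ≤ exp(w_k + k + 1), then v - k - 1 ≤ v - (ln v)/(1 - 1/v) ≤ v - 1; that is, the Region-2 local maximizer p2 = v - (ln v)/(1 - 1/v) lies in Region 2 (the price interval [v - k - 1, v - 1]). -/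
/-! With `t = log v`, `p2 = v - t / (1 - e⁻ᵗ)`, so the claim is `1 ≤ t / (1 - e⁻ᵗ) ≤ k + 1`.
The lower bound is `1 - e⁻ᵗ ≤ t`. For the upper bound, `g t = (k + 1) (1 - e⁻ᵗ) - t` is concave
with `g 0 = 0`, and the Lambert equation for `w` says exactly that `g (w + k + 1) = 0`; so `g ≥ 0`
on `[0, w + k + 1]`, which is the range of `log v`. -/

open Real

lemma one_sub_exp_neg_chord {t T : ℝ} (ht : 0 ≤ t) (htT : t ≤ T) (hT : 0 < T) :
    t / T * (1 - exp (-T)) ≤ 1 - exp (-t) := by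
  have hs : t / T ≤ 1 := (div_le_one hT).2 htT
  have hconv := convexOn_exp.2 (Set.mem_univ 0) (Set.mem_univ (-T))
    (sub_nonneg.2 hs) (div_nonneg ht hT.le) (sub_add_cancel 1 (t / T))
  have harg : (1 - t / T) • (0 : ℝ) + (t / T) • (-T) = -t := by
    simp only [smul_eq_mul]
    field_simp
    ring
  rw [harg, smul_eq_mul, smul_eq_mul, exp_zero] at hconv
  linarith

lemma le_mul_one_sub_exp_neg {c t T : ℝ} (hc : 0 ≤ c) (ht : 0 ≤ t) (htT : t ≤ T)
    (hT : T ≤ c * (1 - exp (-T))) : t ≤ c * (1 - exp (-t)) := by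
  rcases ht.eq_or_lt with rfl | ht
  · simp
  have hT0 : 0 < T := ht.trans_le htT
  calc t = t / T * T := by field_simp
    _ ≤ t / T * (c * (1 - exp (-T))) := by gcongr
    _ = c * (t / T * (1 - exp (-T))) := by ring
    _ ≤ c * (1 - exp (-t)) := by gcongr; exact one_sub_exp_neg_chord ht.le htT hT0

lemma mul_exp_neg_lambert {k w : ℝ} (hwe : w * exp w = -(k + 1) * exp (-(k + 1))) :
    (k + 1) * exp (-(w + k + 1)) = -w := by
  calc (k + 1) * exp (-(w + k + 1)) = -(-(k + 1) * exp (-(k + 1))) * exp (-w) := by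
        rw [show -(w + k + 1) = -(k + 1) + -w by ring, exp_add]; ring
    _ = -(w * (exp w * exp (-w))) := by rw [← hwe]; ring
    _ = -w := by rw [← exp_add, add_neg_cancel, exp_zero, mul_one]

lemma log_le_mul_one_sub_inv {c v T : ℝ} (hc : 0 ≤ c) (hv : 1 ≤ v) (hvT : v ≤ exp T)
    (hT : T ≤ c * (1 - exp (-T))) : log v ≤ c * (1 - 1 / v) := by
  have hv0 : 0 < v := one_pos.trans_le hv
  have hinv : 1 / v = exp (-log v) := by rw [exp_neg, exp_log hv0, one_div]
  rw [hinv]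
  exact le_mul_one_sub_exp_neg hc (log_nonneg hv) ((log_le_iff_le_exp hv0).2 hvT) hT

theorem stmt11_general (k w v : ℝ) (hk : 0 < k)
    (hwe : w * Real.exp w = -(k + 1) * Real.exp (-(k + 1)))
    (hv : 1 < v) (hv2 : v ≤ Real.exp (w + k + 1)) :
    v - k - 1 ≤ v - Real.log v / (1 - 1 / v) ∧
    v - Real.log v / (1 - 1 / v) ≤ v - 1 := by
  have hv0 : 0 < v := one_pos.trans hv
  have hd : 0 < 1 - 1 / v := by rw [sub_pos, div_lt_one hv0]; exact hv
  have hT : w + k + 1 ≤ (k + 1) * (1 - exp (-(w + k + 1))) := by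
    rw [mul_sub, mul_exp_neg_lambert hwe]; linarith
  have hupper : log v ≤ (k + 1) * (1 - 1 / v) :=
    log_le_mul_one_sub_inv (by linarith) hv.le hv2 hT
  have hlower : 1 - 1 / v ≤ log v := one_div v ▸ one_sub_inv_le_log_of_pos hv0
  constructor
  · linarith [(div_le_iff₀ hd).2 hupper]
  · linarith [(one_le_div hd).2 hlower]

/-- If `1 < v ≤ exp(w_k + k + 1)`, then the Region-2 local maximizer
`p2 = v - (ln v)/(1 - 1/v)` lies in the Region-2 price interval
`[v - k - 1, v - 1]`. -/
theorem stmt11 (k w v : ℝ) (hk : 0 < k) (hw1 : -1 ≤ w) (hw2 : w < 0)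
    (hwe : w * Real.exp w = -(k + 1) * Real.exp (-(k + 1)))
    (hv : 1 < v) (hv2 : v ≤ Real.exp (w + k + 1)) :
    v - k - 1 ≤ v - Real.log v / (1 - 1 / v) ∧
    v - Real.log v / (1 - 1 / v) ≤ v - 1 :=
  stmt11_general k w v hk hwe hv hv2
end

section
/- Let k > 0, let w_k be the unique real number w with -1 ≤ w < 0 satisfying w·exp(w) = -(k+1)·exp(-(k+1)), and define f(v) = (1 - v/(k+1))·w_k - ln(v - k) for v > k. Then f is strictly convex on (k, ∞), f(k+1) = 0, the unique minimizer of f is v_m = k - (k+1)/w_k and satisfies k + 1 < v_m, and f has exactly two roots in (k, ∞), the smaller of which is k + 1. -/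
open Real Set

/-!
Put `v = k + t` and `m = (k + 1) / (-w)`; then `f (k + t) = (t - 1) / m - log t`, and `m > 1`
because `-1 ≤ w < 0 < k`. By `log x < x - 1` at `x = t / m`, this function of `t` has its strict
minimum at `t = m`, where (comparing with `t = 1`) it is negative. It vanishes at `t = 1`, grows
to `+∞`, and is strictly convex, so it has exactly one further zero, lying beyond `m`.
-/

theorem StrictConvexOn.eq_or_eq_of_apply_eq {𝕜 β : Type*} [Field 𝕜] [LinearOrder 𝕜]
    [IsStrictOrderedRing 𝕜] [AddCommMonoid β] [LinearOrder β] [IsOrderedAddMonoid β] [Module 𝕜 β]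
    [PosSMulStrictMono 𝕜 β] {s : Set 𝕜} {f : 𝕜 → β} (hf : StrictConvexOn 𝕜 s f) {a b x : 𝕜}
    (ha : a ∈ s) (hb : b ∈ s) (hab : a < b) (hfb : f b = f a) (hx : x ∈ s) (hfx : f x = f a) :
    x = a ∨ x = b := by
  have no_three :
      ∀ {p q r}, p ∈ s → r ∈ s → p < q → q < r → f p = f q → f r = f q → False := by
    intro p q r hp hr hpq hqr hfp hfr
    have hq : q ∈ openSegment 𝕜 p r := by rw [openSegment_eq_Ioo (hpq.trans hqr)]; exact ⟨hpq, hqr⟩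
    have := hf.lt_on_openSegment hp hr (hpq.trans hqr).ne hq
    rw [hfp, hfr, max_self] at this
    exact this.false
  rcases lt_trichotomy x a with hxa | rfl | hax
  · exact (no_three hx hb hxa hab hfx hfb).elim
  · exact Or.inl rfl
  rcases lt_trichotomy x b with hxb | rfl | hbx
  · exact (no_three ha hb hax hxb hfx.symm (hfb.trans hfx.symm)).elim
  · exact Or.inr rfl
  · exact (no_three ha hx hab hbx hfb.symm (hfx.trans hfb.symm)).elim

theorem sub_one_div_sub_log_lt {m t : ℝ} (hm : 0 < m) (ht : 0 < t) (htm : t ≠ m) :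
    (m - 1) / m - log m < (t - 1) / m - log t := by
  have hlog : log (t / m) < t / m - 1 :=
    log_lt_sub_one_of_pos (div_pos ht hm) (by rwa [ne_eq, div_eq_one_iff_eq hm.ne'])
  rw [log_div ht.ne' hm.ne'] at hlog
  have hdiff : (t - 1) / m - (m - 1) / m = t / m - 1 := by field_simp; ring
  linarith

theorem exists_gt_sub_one_div_sub_log_eq_zero {m : ℝ} (hm : 0 < m) (hm1 : m ≠ 1) :
    ∃ t, m < t ∧ (t - 1) / m - log t = 0 := by
  set T := (2 * m + 1) ^ 2 with hT
  have hmT : m < T := by nlinarith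
  have hmin : (m - 1) / m - log m < 0 := by
    simpa using sub_one_div_sub_log_lt hm one_pos (Ne.symm hm1)
  -- `log T = 2 log (2m+1) ≤ 4m`, while `(T - 1)/m = 4m + 4`
  have hpos : 0 < (T - 1) / m - log T := by
    have hlog : log (2 * m + 1) ≤ 2 * m := by
      linarith [log_le_sub_one_of_pos (by linarith : (0 : ℝ) < 2 * m + 1)]
    have hT1 : (T - 1) / m = 4 * m + 4 := by rw [hT]; field_simp; ring
    rw [hT1, hT, log_pow]
    push_cast
    linarith
  have hcont : ContinuousOn (fun t => (t - 1) / m - log t) (Icc m T) :=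
    (continuousOn_id.sub continuousOn_const).div_const m |>.sub
      (continuousOn_log.mono fun t ht => (hm.trans_le ht.1).ne')
  obtain ⟨t, ht, hroot⟩ := intermediate_value_Ioo hmT.le hcont ⟨hmin, hpos⟩
  exact ⟨t, ht.1, hroot⟩

/-- The function `f = π4 - π3` of the statement. -/
noncomputable def profitGap (k w v : ℝ) : ℝ := (1 - v / (k + 1)) * w - log (v - k)

theorem strictConvexOn_profitGap (k w : ℝ) : StrictConvexOn ℝ (Ioi k) (profitGap k w) := by
  have hlin : ConvexOn ℝ (Ioi k) fun v => (1 - v / (k + 1)) * w :=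
    ⟨convex_Ioi k, fun x _ y _ a b _ _ hab => le_of_eq (by
      simp only [smul_eq_mul]; linear_combination (-w) * hab)⟩
  have hlog : StrictConvexOn ℝ (Ioi k) fun v => -log (v - k) := by
    have h := strictConcaveOn_log_Ioi.neg.translate_left (-k)
    rw [show (fun z => -k + z) ⁻¹' Ioi 0 = Ioi k by ext; simp] at h
    exact h.congr fun v _ => by simp [sub_eq_add_neg]
  exact hlin.add_strictConvexOn hlog

theorem profitGap_self_add_one {k : ℝ} (hk : k + 1 ≠ 0) (w : ℝ) : profitGap k w (k + 1) = 0 := by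
  simp [profitGap, div_self hk]

theorem profitGap_add {k : ℝ} (hk : k + 1 ≠ 0) (w t : ℝ) :
    profitGap k w (k + t) = (t - 1) / ((k + 1) / -w) - log t := by
  rw [profitGap, add_sub_cancel_left]
  field_simp
  ring

theorem stmt12_general (k w : ℝ) (hk : 0 < k) (hw1 : -1 ≤ w) (hw2 : w < 0) :
    StrictConvexOn ℝ (Set.Ioi k)
      (fun v : ℝ => (1 - v / (k + 1)) * w - Real.log (v - k)) ∧
    (1 - (k + 1) / (k + 1)) * w - Real.log ((k + 1) - k) = 0 ∧
    k + 1 < k - (k + 1) / w ∧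
    (∀ v ∈ Set.Ioi k, v ≠ k - (k + 1) / w →
      (1 - (k - (k + 1) / w) / (k + 1)) * w - Real.log ((k - (k + 1) / w) - k) <
        (1 - v / (k + 1)) * w - Real.log (v - k)) ∧
    (∃ v2 : ℝ, k + 1 < v2 ∧
      (1 - v2 / (k + 1)) * w - Real.log (v2 - k) = 0 ∧
      ∀ v ∈ Set.Ioi k, (1 - v / (k + 1)) * w - Real.log (v - k) = 0 →
        v = k + 1 ∨ v = v2) := by
  have hk1 : k + 1 ≠ 0 := by positivity
  set m := (k + 1) / -w with hm
  have hvm : k - (k + 1) / w = k + m := by rw [hm, div_neg]; ring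
  have hm1 : 1 < m := (one_lt_div (by linarith)).2 (by linarith)
  have hroot1 := profitGap_self_add_one hk1 w
  obtain ⟨t, hmt, ht⟩ := exists_gt_sub_one_div_sub_log_eq_zero (by linarith) hm1.ne'
  have hroot2 : profitGap k w (k + t) = 0 := by rwa [profitGap_add hk1 w]
  refine ⟨strictConvexOn_profitGap k w, hroot1, by linarith, fun v hv hne => ?_,
    k + t, by linarith, hroot2, fun v hv hv0 => ?_⟩
  · show profitGap k w _ < profitGap k w v
    rw [hvm] at hne ⊢
    rw [← add_sub_cancel k v, profitGap_add hk1 w, profitGap_add hk1 w]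
    exact sub_one_div_sub_log_lt (by linarith) (sub_pos.2 hv) fun h => hne (by linarith)
  · exact (strictConvexOn_profitGap k w).eq_or_eq_of_apply_eq (lt_add_one k)
      (mem_Ioi.2 (by linarith)) (by linarith) (hroot2.trans hroot1.symm) hv (hv0.trans hroot1.symm)

/-- With `w = w_k` and `f(v) = (1 - v/(k+1))·w - ln(v - k)` for `v > k`:
`f` is strictly convex on `(k, ∞)`, `f(k+1) = 0`, the unique minimizer is
`v_m = k - (k+1)/w` and satisfies `k + 1 < v_m`, and `f` has exactly two roots
in `(k, ∞)`, the smaller of which is `k + 1`. -/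
theorem stmt12 (k w : ℝ) (hk : 0 < k) (hw1 : -1 ≤ w) (hw2 : w < 0)
    (hwe : w * Real.exp w = -(k + 1) * Real.exp (-(k + 1))) :
    StrictConvexOn ℝ (Set.Ioi k)
      (fun v : ℝ => (1 - v / (k + 1)) * w - Real.log (v - k)) ∧
    (1 - (k + 1) / (k + 1)) * w - Real.log ((k + 1) - k) = 0 ∧
    k + 1 < k - (k + 1) / w ∧
    (∀ v ∈ Set.Ioi k, v ≠ k - (k + 1) / w →
      (1 - (k - (k + 1) / w) / (k + 1)) * w - Real.log ((k - (k + 1) / w) - k) <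
        (1 - v / (k + 1)) * w - Real.log (v - k)) ∧
    (∃ v2 : ℝ, k + 1 < v2 ∧
      (1 - v2 / (k + 1)) * w - Real.log (v2 - k) = 0 ∧
      ∀ v ∈ Set.Ioi k, (1 - v / (k + 1)) * w - Real.log (v - k) = 0 →
        v = k + 1 ∨ v = v2) :=
  stmt12_general k w hk hw1 hw2
end

section
/- Let k > 0, let w_k be the unique real number w with -1 ≤ w < 0 satisfying w·exp(w) = -(k+1)·exp(-(k+1)), let f(v) = (1 - v/(k+1))·w_k - ln(v - k) for v > k, and let v_f be the unique root of f with v_f > k + 1. Then exp(w_k + k + 1) ≤ v_f. -/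
/-- With `w = w_k` and `v_f` the root of `f(v) = (1 - v/(k+1))·w - ln(v - k)`
larger than `k + 1`, one has `exp(w + k + 1) ≤ v_f`. -/
theorem stmt13 (k w vf : ℝ) (hk : 0 < k) (hw1 : -1 ≤ w) (hw2 : w < 0)
    (hwe : w * Real.exp w = -(k + 1) * Real.exp (-(k + 1)))
    (hvf : k + 1 < vf)
    (hroot : (1 - vf / (k + 1)) * w - Real.log (vf - k) = 0) :
    Real.exp (w + k + 1) ≤ vf := by
  have ht0 : 0 < -w := by linarith
  have hw0 : w ≠ 0 := ne_of_lt hw2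
  have hk1 : (0:ℝ) < k + 1 := by linarith
  have hk1' : (k:ℝ) + 1 ≠ 0 := ne_of_gt hk1
  have hexpw : Real.exp w = (k + 1) * Real.exp (-(k + 1)) / (-w) := by
    rw [eq_div_iff (ne_of_gt ht0)]
    linear_combination -hwe
  have hcancel : Real.exp (-(k + 1)) * Real.exp (k + 1) = 1 := by
    rw [← Real.exp_add, show -(k + 1) + (k + 1) = (0:ℝ) by ring, Real.exp_zero]
  have hE : Real.exp (w + k + 1) = (k + 1) / (-w) := by
    rw [show w + k + 1 = w + (k + 1) by ring, Real.exp_add, hexpw,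
      div_mul_eq_mul_div, mul_assoc, hcancel, mul_one]
  rw [hE]
  by_contra hcon
  push_neg at hcon
  obtain ⟨c, hc⟩ : ∃ c : ℝ, c = -w / (k + 1) := ⟨_, rfl⟩
  obtain ⟨x, hx⟩ : ∃ x : ℝ, x = vf - k := ⟨_, rfl⟩
  obtain ⟨y, hy⟩ : ∃ y : ℝ, y = (k + 1) / (-w) - k := ⟨_, rfl⟩
  have hc0 : 0 < c := hc ▸ div_pos ht0 hk1
  have hx1 : 1 < x := by rw [hx]; linarith
  have hxy : x < y := by rw [hx, hy]; linarith
  have hy1 : 1 < y := lt_trans hx1 hxy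
  have hy0 : (0:ℝ) < y := by linarith
  have hym : y - 1 ≠ 0 := by intro h; linarith [(by linarith : (0:ℝ) < y - 1)]
  have hlnx : Real.log x = c * (x - 1) := by
    have h1 : Real.log x = (1 - vf / (k + 1)) * w := by rw [hx]; linarith
    rw [h1, hc, hx]
    field_simp
    ring
  have hek : k + 1 ≤ Real.exp k := by
    have := Real.add_one_le_exp k; linarith
  have hexpk : Real.exp (-k) ≤ 1 / (k + 1) := by
    rw [Real.exp_neg, one_div]
    exact inv_anti₀ hk1 hek
  have h2 : (k + 1) * Real.exp (-k) ≤ 1 := by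
    calc (k + 1) * Real.exp (-k) ≤ (k + 1) * (1 / (k + 1)) :=
          mul_le_mul_of_nonneg_left hexpk (le_of_lt hk1)
      _ = 1 := by field_simp
  have hyge : Real.exp (1 + w) ≤ y := by
    have h1 : Real.exp (1 + w) = (k + 1) * Real.exp (-k) / (-w) := by
      rw [show (1:ℝ) + w = w + 1 by ring, Real.exp_add, hexpw]
      rw [div_mul_eq_mul_div, mul_assoc, ← Real.exp_add]
      norm_num
    have h3 : (k + 1) * Real.exp (-k) ≤ (k + 1) - k * (-w) := by
      nlinarith [h2, mul_nonneg (by linarith : (0:ℝ) ≤ 1 + w) hk.le]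
    calc Real.exp (1 + w) = (k + 1) * Real.exp (-k) / (-w) := h1
      _ ≤ ((k + 1) - k * (-w)) / (-w) := by gcongr
      _ = (k + 1) / (-w) - k := by field_simp; ring
      _ = y := hy.symm
  have hlny : c * (y - 1) ≤ Real.log y := by
    have hcy : c * (y - 1) = 1 + w := by
      rw [hc, hy]; field_simp; ring
    rw [hcy]
    exact (Real.le_log_iff_exp_le hy0).mpr hyge
  have hlam : (0:ℝ) < (y - x) / (y - 1) := div_pos (by linarith) (by linarith)
  have hmu : (0:ℝ) < (x - 1) / (y - 1) := div_pos (by linarith) (by linarith)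
  have hsum : (y - x) / (y - 1) + (x - 1) / (y - 1) = 1 := by
    rw [← add_div, div_eq_one_iff_eq hym]; ring
  have hne : (1:ℝ) ≠ y := by linarith
  have hconc := strictConcaveOn_log_Ioi.2 (Set.mem_Ioi.mpr one_pos)
    (Set.mem_Ioi.mpr hy0) hne hlam hmu hsum
  simp only [smul_eq_mul, Real.log_one, mul_zero, zero_add, mul_one] at hconc
  have hcomb : (y - x) / (y - 1) + (x - 1) / (y - 1) * y = x := by
    field_simp
    ring
  rw [hcomb] at hconc
  -- hconc : (x-1)/(y-1) * log y < log x
  have hstep : (x - 1) / (y - 1) * (c * (y - 1)) ≤ (x - 1) / (y - 1) * Real.log y :=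
    mul_le_mul_of_nonneg_left hlny (le_of_lt hmu)
  have heq : (x - 1) / (y - 1) * (c * (y - 1)) = c * (x - 1) := by
    field_simp
  rw [heq] at hstep
  rw [hlnx] at hconc
  linarith
end

section
/- Let k > 0 and let u(k) be the unique real number u > 1 satisfying k = u - (ln u)/(1 - 1/u). If v ≥ k + u(k), then 0 ≤ v - k - (ln(v - k))/(1 - 1/(v - k)) ≤ v - u(k); that is, the Region-4 local maximizer p4 = v - k - (ln(v-k))/(1 - 1/(v-k)) lies in Region 4 (the price interval [0, v - u(k)]). -/
noncomputable def f14 (x : ℝ) : ℝ := x * Real.log x / (x - 1)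

lemma hasDerivAt_f14 {x : ℝ} (hx : 1 < x) :
    HasDerivAt f14 ((x - 1 - Real.log x) / (x - 1) ^ 2) x := by
  have hx0 : 0 < x := by linarith
  have h1 : HasDerivAt (fun y : ℝ => y * Real.log y) (1 * Real.log x + x * x⁻¹) x :=
    (hasDerivAt_id x).mul (Real.hasDerivAt_log hx0.ne')
  have h2 : HasDerivAt (fun y : ℝ => y - 1) 1 x := (hasDerivAt_id x).sub_const 1
  have hne : x - 1 ≠ 0 := by linarith
  have := h1.div h2 hne
  refine HasDerivAt.congr_deriv (f := f14) this ?_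
  rw [mul_inv_cancel₀ hx0.ne']
  ring

lemma f14_eq {x : ℝ} (hx : 1 < x) :
    Real.log x / (1 - 1 / x) = f14 x := by
  have hx0 : (0:ℝ) < x := by linarith
  have hne : x - 1 ≠ 0 := by linarith
  unfold f14
  rw [show (1 : ℝ) - 1 / x = (x - 1) / x by field_simp]
  field_simp

lemma f14_mono {a b : ℝ} (ha : 1 < a) (hab : a ≤ b) : f14 a ≤ f14 b := by
  rcases eq_or_lt_of_le hab with rfl | h
  · exact le_rfl
  have hmono : StrictMonoOn f14 (Set.Icc a b) := by
    apply strictMonoOn_of_deriv_pos (convex_Icc a b)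
    · intro x hx
      have hx1 : 1 < x := lt_of_lt_of_le ha hx.1
      exact (hasDerivAt_f14 hx1).continuousAt.continuousWithinAt
    · intro x hx
      rw [interior_Icc] at hx
      have hx1 : 1 < x := lt_trans ha hx.1
      have hx0 : 0 < x := by linarith
      rw [(hasDerivAt_f14 hx1).deriv]
      have hlog : Real.log x < x - 1 := Real.log_lt_sub_one_of_pos hx0 (by linarith)
      apply div_pos (by linarith)
      exact pow_pos (by linarith) 2
  exact (hmono (Set.left_mem_Icc.mpr hab) (Set.right_mem_Icc.mpr hab) h).le

/-- If `v ≥ k + u(k)`, then the Region-4 local maximizer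
`p4 = v - k - (ln(v-k))/(1 - 1/(v-k))` lies in the Region-4 price interval
`[0, v - u(k)]`. -/
theorem stmt14 (k u v : ℝ) (hk : 0 < k) (hu : 1 < u)
    (huk : k = u - Real.log u / (1 - 1 / u)) (hv : k + u ≤ v) :
    0 ≤ v - k - Real.log (v - k) / (1 - 1 / (v - k)) ∧
    v - k - Real.log (v - k) / (1 - 1 / (v - k)) ≤ v - u := by
  set w := v - k with hw
  have hw1 : 1 < w := by simp only [hw]; linarith
  have hw0 : (0:ℝ) < w := by linarith
  rw [f14_eq hw1]
  have hfu : Real.log u / (1 - 1 / u) = f14 u := f14_eq hu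
  rw [hfu] at huk
  have hlog : Real.log w ≤ w - 1 := Real.log_le_sub_one_of_pos hw0
  have h1 : f14 w ≤ w := by
    unfold f14
    rw [div_le_iff₀ (by linarith : (0:ℝ) < w - 1)]
    nlinarith
  have h2 : f14 u ≤ f14 w := f14_mono hu (by linarith)
  constructor
  · linarith
  · linarith
end

section
/- Let k > 0, let u(k) be the unique real number u > 1 satisfying k = u - (ln u)/(1 - 1/u), let w_k be the unique real number w with -1 ≤ w < 0 satisfying w·exp(w) = -(k+1)·exp(-(k+1)), let f(v) = (1 - v/(k+1))·w_k - ln(v - k), and let v_f be the unique root of f with v_f > k + 1. Then u(k) ≤ exp(w_k + k + 1) and v_f ≥ k + u(k). -/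
lemma aux_mono15 (a b : ℝ) (ha : 0 < a) (hab : a < b) (hb : b ≤ 1) :
    a * Real.exp (-a) < b * Real.exp (-b) := by
  have hb0 : 0 < b := ha.trans hab
  have h := Real.add_one_lt_exp (x := a - b) (by linarith)
  have key : a / b ≤ a - b + 1 := by
    rw [div_le_iff₀ hb0]; nlinarith
  have h2 : a < Real.exp (a - b) * b := by
    have := key.trans_lt h
    exact (div_lt_iff₀ hb0).mp this
  have hea : Real.exp (a - b) * Real.exp (-a) = Real.exp (-b) := by
    rw [← Real.exp_add]; ring_nf
  have hpos : 0 < Real.exp (-a) := Real.exp_pos _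
  calc a * Real.exp (-a) < Real.exp (a - b) * b * Real.exp (-a) := by nlinarith
    _ = b * Real.exp (-b) := by rw [mul_comm (Real.exp (a-b)) b, mul_assoc, hea]

set_option maxHeartbeats 1000000 in
/-- With `u = u(k)`, `w = w_k`, and `v_f` the root of
`f(v) = (1 - v/(k+1))·w - ln(v - k)` larger than `k + 1`:
`u ≤ exp(w + k + 1)` and `v_f ≥ k + u`. -/
theorem stmt15 (k u w vf : ℝ) (hk : 0 < k) (hu : 1 < u)
    (huk : k = u - Real.log u / (1 - 1 / u))
    (hw1 : -1 ≤ w) (hw2 : w < 0)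
    (hwe : w * Real.exp w = -(k + 1) * Real.exp (-(k + 1)))
    (hvf : k + 1 < vf)
    (hroot : (1 - vf / (k + 1)) * w - Real.log (vf - k) = 0) :
    u ≤ Real.exp (w + k + 1) ∧ k + u ≤ vf := by
  have hu0 : (0:ℝ) < u := by linarith
  set L := Real.log u with hL
  have hLpos : 0 < L := Real.log_pos hu
  have he : (0:ℝ) < 1 - 1/u := by
    have : 1/u < 1 := by rw [div_lt_one hu0]; linarith
    linarith
  -- log u ≥ 1 - 1/u
  have hL1 : 1 - 1/u ≤ L := by
    have := Real.log_le_sub_one_of_pos (x := 1/u) (by positivity)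
    rw [Real.log_div one_ne_zero (ne_of_gt hu0), Real.log_one] at this
    linarith
  have hune : u - 1 ≠ 0 := by linarith
  -- k expressed: (u - k)*(u - 1) = u * L
  have hk2 : (u - k) * (u - 1) = u * L := by
    rw [huk]; field_simp; ring
  have hstep : (k+1)*(u-1) = u*u - 1 - u*L := by linear_combination -hk2
  have hL1u : u - 1 ≤ u * L := by
    have h := mul_le_mul_of_nonneg_left hL1 hu0.le
    have h2 : u * (1 - 1/u) = u - 1 := by field_simp
    linarith [h2 ▸ h]
  have hku : k + 1 ≤ u := by nlinarith [hk2, hL1u]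
  -- 2L < u - 1/u via sinh
  have hL2 : 2 * L < u - 1/u := by
    have hs := (Real.self_lt_sinh_iff (x := L)).mpr hLpos
    have : Real.sinh L = (u - 1/u)/2 := by
      rw [Real.sinh_eq, Real.exp_log hu0, Real.exp_neg, Real.exp_log hu0]
      rw [one_div]
    linarith [this ▸ hs]
  have hL2u : 2 * L * u < u*u - 1 := by
    have h := mul_lt_mul_of_pos_right hL2 hu0
    have h2 : (u - 1/u) * u = u*u - 1 := by field_simp
    linarith [h2 ▸ h]
  -- (k+1)(1-1/u) ≥ L
  have hkL : L ≤ (k+1) * (1 - 1/u) := by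
    have h3 : (k+1)*(1 - 1/u) = ((k+1)*(u-1))/u := by field_simp
    rw [h3, le_div_iff₀ hu0, hstep]
    nlinarith
  -- t = -w
  set t := -w with ht
  have ht0 : 0 < t := by simp [ht]; linarith
  have ht1 : t ≤ 1 := by simp [ht]; linarith
  have hte : t * Real.exp (-t) = (k+1) * Real.exp (-(k+1)) := by
    have : Real.exp (-t) = Real.exp w := by rw [ht]; ring_nf
    rw [this, ht]; linarith [hwe]
  -- Claim: u * t ≤ k + 1
  have hut : u * t ≤ k + 1 := by
    by_contra hcon
    push_neg at hcon
    have hc : (k+1)/u < t := by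
      rw [div_lt_iff₀ hu0]; nlinarith
    have hcpos : 0 < (k+1)/u := by positivity
    have hm := aux_mono15 ((k+1)/u) t hcpos hc ht1
    rw [hte] at hm
    -- but (k+1)/u * exp(-(k+1)/u) ≥ (k+1) exp(-(k+1))
    have hexp : u ≤ Real.exp ((k+1)*(1 - 1/u)) := by
      calc u = Real.exp L := (Real.exp_log hu0).symm
        _ ≤ _ := Real.exp_le_exp.mpr hkL
    have hsplit : Real.exp (-((k+1)/u)) = Real.exp ((k+1)*(1-1/u)) * Real.exp (-(k+1)) := by
      rw [← Real.exp_add]; congr 1; field_simp; ring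
    have hge : (k+1) * Real.exp (-(k+1)) ≤ (k+1)/u * Real.exp (-((k+1)/u)) := by
      rw [hsplit]
      have hep : 0 < Real.exp (-(k+1)) := Real.exp_pos _
      have h1 : (k+1)/u * (Real.exp ((k+1)*(1-1/u)) * Real.exp (-(k+1)))
          = (k+1) * Real.exp ((k+1)*(1-1/u)) * Real.exp (-(k+1)) / u := by ring
      rw [h1, le_div_iff₀ hu0]
      have hkp : (0:ℝ) < k + 1 := by linarith
      linarith [mul_le_mul_of_nonneg_left hexp (mul_pos hkp hep).le,
        mul_comm ((k+1) * Real.exp (-(k+1))) u]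
    linarith
  constructor
  · -- u ≤ exp(w + k + 1) = (k+1)/t
    have key : Real.exp (w + k + 1) * t = k + 1 := by
      have hew : Real.exp w = Real.exp (-t) := by rw [ht]; ring_nf
      have h1 : Real.exp (w + k + 1) = Real.exp w * Real.exp (k+1) := by
        rw [← Real.exp_add]; ring_nf
      rw [h1, hew]
      calc Real.exp (-t) * Real.exp (k+1) * t = (t * Real.exp (-t)) * Real.exp (k+1) := by ring
        _ = (k+1) * Real.exp (-(k+1)) * Real.exp (k+1) := by rw [hte]
        _ = k + 1 := by
            have hz : -(k+1) + (k+1) = 0 := by ring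
            rw [mul_assoc, ← Real.exp_add, hz, Real.exp_zero, mul_one]
    nlinarith [hut, key, ht0]
  · -- vf ≥ k + u
    by_contra hcon
    push_neg at hcon
    have hu1 : (0:ℝ) < u - 1 := by linarith
    set a := (k + u - vf)/(u - 1) with hadef
    set b := (vf - k - 1)/(u - 1) with hbdef
    have ha : 0 < a := by apply div_pos; linarith; exact hu1
    have hb : 0 < b := by apply div_pos; linarith; exact hu1
    have hab : a + b = 1 := by rw [hadef, hbdef]; field_simp; ring
    have hcomb : a * 1 + b * u = vf - k := by rw [hadef, hbdef]; field_simp; ring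
    have hlog := strictConcaveOn_log_Ioi.2 (Set.mem_Ioi.mpr one_pos)
      (Set.mem_Ioi.mpr hu0) (ne_of_lt hu) ha hb hab
    simp only [smul_eq_mul] at hlog
    rw [show a * 1 + b * u = a * 1 + b * u from rfl] at hlog
    rw [hcomb, Real.log_one, mul_zero, zero_add] at hlog
    -- hlog : b * log u < log (vf - k)
    have hkp : (0:ℝ) < k + 1 := by linarith
    have hlin : (1 - vf/(k+1)) * w = b * ((1 - (k+u)/(k+1)) * w) := by
      rw [hbdef]
      field_simp
      ring
    have hg : (1 - (k+u)/(k+1)) * w ≤ L := by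
      have h1 : (1 - (k+u)/(k+1)) * w = (u - 1) * t / (k+1) := by
        field_simp [ht]; ring
      rw [h1, div_le_iff₀ hkp]
      -- (u-1) t ≤ (k+1) L
      have ht2 : t * u ≤ k + 1 := by linarith [mul_comm u t]
      have h5 : t * u * (u-1) ≤ (k+1) * (u-1) := mul_le_mul_of_nonneg_right ht2 hu1.le
      have h6 : (k+1) * (u-1) ≤ (k+1) * (u*L) := mul_le_mul_of_nonneg_left hL1u hkp.le
      nlinarith [h5, h6, hu0]
    have hfin : b * ((1 - (k+u)/(k+1)) * w) ≤ b * L := mul_le_mul_of_nonneg_left hg hb.le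
    linarith [hroot, hlin, hfin, hlog]
end

section
/- Let k > 0, let u(k) be the unique real number u > 1 satisfying k = u - (ln u)/(1 - 1/u), and for a > 0 let R(a) be the unique real r with -1 ≤ r < 0 satisfying r·exp(r) = -a·exp(-a). Then for every v0 with 1 < v0 < u(k) - k, the quantity v0 + (v0 + k)·R(v0) is strictly negative. -/
private lemma xexp_strictMono : StrictMonoOn (fun x : ℝ => x * Real.exp x) (Set.Ici (-1)) := by
  have h : ∀ x ∈ interior (Set.Ici (-1 : ℝ)), 0 < deriv (fun x : ℝ => x * Real.exp x) x := by
    intro x hx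
    rw [interior_Ici] at hx
    have hd : HasDerivAt (fun x : ℝ => x * Real.exp x) (1 * Real.exp x + x * Real.exp x) x :=
      (hasDerivAt_id x).mul (Real.hasDerivAt_exp x)
    rw [hd.deriv]
    have : 0 < Real.exp x := Real.exp_pos x
    have hx' : -1 < x := hx
    nlinarith
  exact strictMonoOn_of_deriv_pos (convex_Ici _) (by fun_prop) h

private lemma psi_concave (k : ℝ) (hk : 0 < k) :
    StrictConcaveOn ℝ (Set.Ioi (0:ℝ))
      (fun w => Real.log w - w + (k + 1) - k * w⁻¹) := by
  set ψ : ℝ → ℝ := fun w => Real.log w - w + (k + 1) - k * w⁻¹ with hψ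
  set g : ℝ → ℝ := fun w => w⁻¹ - 1 + k * (w⁻¹ * w⁻¹) with hg
  have hder : ∀ x : ℝ, 0 < x → HasDerivAt ψ (x⁻¹ - 1 + k * (x⁻¹ * x⁻¹)) x := by
    intro x hx
    have h1 := (((Real.hasDerivAt_log hx.ne').sub (hasDerivAt_id x)).add_const (k + 1)).sub
        ((hasDerivAt_inv hx.ne').const_mul k)
    exact (show HasDerivAt ψ _ x from h1).congr_deriv (by ring)
  have hderg : ∀ x : ℝ, 0 < x →
      HasDerivAt g (-(x ^ 2)⁻¹ + k * (-(x ^ 2)⁻¹ * x⁻¹ + x⁻¹ * -(x ^ 2)⁻¹)) x := by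
    intro x hx
    exact (((hasDerivAt_inv hx.ne').sub_const 1).add
      (((hasDerivAt_inv hx.ne').mul (hasDerivAt_inv hx.ne')).const_mul k))
  have hderiv_eq : ∀ x ∈ Set.Ioi (0:ℝ), deriv ψ x = g x := by
    intro x hx
    exact (hder x hx).deriv
  apply strictConcaveOn_of_deriv2_neg (convex_Ioi 0)
  · apply ContinuousOn.sub
    · apply ContinuousOn.add
      · exact (Real.continuousOn_log.mono (fun x hx => ne_of_gt hx)).sub continuousOn_id
      · exact continuousOn_const
    · exact continuousOn_const.mul (continuousOn_inv₀.mono (fun x hx => ne_of_gt (Set.mem_Ioi.mp hx)))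
  · intro x hx
    rw [interior_Ioi] at hx
    have hx0 : (0:ℝ) < x := hx
    have heq : deriv ψ =ᶠ[nhds x] g := by
      filter_upwards [isOpen_Ioi.mem_nhds hx] with y hy
      exact hderiv_eq y hy
    have h2 : deriv (deriv ψ) x = deriv g x := heq.deriv_eq
    simp only [Function.iterate_succ, Function.iterate_zero, Function.comp_apply, id_eq]
    rw [h2, (hderg x hx0).deriv]
    have hxi : 0 < (x ^ 2)⁻¹ := by positivity
    have hxi' : 0 < x⁻¹ := by positivity
    nlinarith [mul_pos (mul_pos hk hxi) hxi']

/-- In Region 3 (`1 < v0 < u(k) - k`), the quantity `v0 + (v0 + k)·R(v0)` is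
strictly negative, where `r = R(v0)` is the value in `[-1, 0)` with
`r·eʳ = -v0·e^{-v0}`. -/
theorem stmt17 (k u v0 r : ℝ) (hk : 0 < k) (hu : 1 < u)
    (huk : k = u - Real.log u / (1 - 1 / u))
    (h1 : 1 < v0) (h2 : v0 < u - k)
    (hr1 : -1 ≤ r) (hr2 : r < 0)
    (hre : r * Real.exp r = -v0 * Real.exp (-v0)) :
    v0 + (v0 + k) * r < 0 := by
  set s := v0 + k with hs
  have hs1 : (1:ℝ) < s := by rw [hs]; linarith
  have hsu : s < u := by rw [hs]; linarith
  have hs0 : (0:ℝ) < s := by linarith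
  have hu0 : (0:ℝ) < u := by linarith
  have hu1 : u - 1 ≠ 0 := by intro h; linarith [h]
  -- log u * u = (u - k)(u - 1)
  have hlogu : Real.log u * u = (u - k) * (u - 1) := by
    have h1u : (1:ℝ) - 1 / u = (u - 1) / u := by field_simp
    rw [h1u, div_div_eq_mul_div] at huk
    have hds : Real.log u * u / (u - 1) = u - k := by linarith
    have := (div_eq_iff hu1).mp hds
    linarith [this]
  -- values of ψ at 1 and u
  have hψu : Real.log u - u + (k + 1) - k * u⁻¹ = 0 := by
    have hui : u * u⁻¹ = 1 := mul_inv_cancel₀ hu0.ne'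
    have hlu : Real.log u = (u - k) * (u - 1) * u⁻¹ := by
      rw [← hlogu]; field_simp
    rw [hlu]
    field_simp
    ring
  -- strict concavity gives ψ s > 0
  have hψs : 0 < Real.log s - s + (k + 1) - k * s⁻¹ := by
    have hconc := psi_concave k hk
    have ha : (0:ℝ) < (u - s) / (u - 1) := by
      apply div_pos <;> linarith
    have hb : (0:ℝ) < (s - 1) / (u - 1) := by
      apply div_pos <;> linarith
    have hab : (u - s) / (u - 1) + (s - 1) / (u - 1) = 1 := by
      rw [← add_div, div_eq_one_iff_eq hu1]
      ring
    have hkey := hconc.2 (Set.mem_Ioi.mpr (by norm_num : (0:ℝ) < 1))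
      (Set.mem_Ioi.mpr hu0) (by intro h; exact absurd h (by linarith) : (1:ℝ) ≠ u) ha hb hab
    simp only [smul_eq_mul, mul_one] at hkey
    have hX : (u - s) / (u - 1) + (s - 1) / (u - 1) * u = s := by
      rw [div_mul_eq_mul_div, ← add_div, div_eq_iff hu1]
      ring
    rw [hX] at hkey
    simp only [Real.log_one, inv_one, mul_one] at hkey
    nlinarith [hkey, hψu, ha, hb]
  -- derive log s > v0 - v0 / s
  have hsne : s ≠ 0 := hs0.ne'
  have heqd : v0 - v0 / s = s - (k + 1) + k * s⁻¹ := by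
    rw [hs]
    have hne : v0 + k ≠ 0 := by positivity
    field_simp
    ring
  have hlogs : v0 - v0 / s < Real.log s := by
    rw [heqd]; linarith
  -- f(-v0/s) > f(r) where f x = x exp x
  have hts : -v0 / s * Real.exp (-v0 / s) > -v0 * Real.exp (-v0) := by
    have hexp : Real.exp (v0 - v0 / s) < s := by
      calc Real.exp (v0 - v0 / s) < Real.exp (Real.log s) := Real.exp_lt_exp.mpr hlogs
        _ = s := Real.exp_log hs0
    have hev : Real.exp (-v0 / s) < s * Real.exp (-v0) := by
      have hre0 : s * Real.exp (-v0) = s / Real.exp v0 := by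
        rw [Real.exp_neg]; ring
      rw [hre0, lt_div_iff₀ (Real.exp_pos v0), ← Real.exp_add]
      have harg : -v0 / s + v0 = v0 - v0 / s := by ring
      rw [harg]
      exact hexp
    have hv0s : 0 < v0 / s := by positivity
    have hmul := mul_lt_mul_of_pos_left hev hv0s
    have heq1 : v0 / s * (s * Real.exp (-v0)) = v0 * Real.exp (-v0) := by
      field_simp
    have heq2 : -v0 / s * Real.exp (-v0 / s) = -(v0 / s * Real.exp (-v0 / s)) := by ring
    rw [heq2]
    linarith [hmul, heq1]
  have ht1 : -1 ≤ -v0 / s := by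
    rw [neg_div, neg_le_neg_iff, div_le_one hs0]
    linarith
  have hrt : r < -v0 / s := by
    by_contra hcon
    push_neg at hcon
    rcases eq_or_lt_of_le hcon with heq | hlt
    · rw [heq] at hts
      linarith [hts, hre]
    · have := xexp_strictMono (Set.mem_Ici.mpr ht1) (Set.mem_Ici.mpr hr1) hlt
      simp only at this
      rw [hre] at this
      linarith
  have hfin : r * s < -v0 := by
    rw [lt_div_iff₀ hs0] at hrt
    linarith [hrt]
  have hcomm : (v0 + k) * r = r * s := by rw [hs]; ring
  linarith [hfin, hcomm]
end

section
/- Let v, p, k be real numbers and let λ0, λ1 ≥ 0 satisfy: (i) λ0 = 0 or v - p - k = λ0/(1 - exp(-λ0)); and (ii) λ1 = 0 or v - p = λ1·exp(λ0)/(1 - exp(-λ1)). Then the social welfare (1 - exp(-λ0))·(v - p - k) + exp(-λ0)·(1 - exp(-λ1))·(v - p) - (λ0 + λ1) equals 0. In particular, in every equilibrium of the two-period model (Regions 1 through 4), social welfare is zero. -/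
lemma aux_ne (x : ℝ) (hx : 0 ≤ x) (h : x ≠ 0) : 1 - Real.exp (-x) ≠ 0 := by
  have : Real.exp (-x) < 1 := by
    rw [Real.exp_lt_one_iff]; cases hx.lt_or_eq with
    | inl h' => linarith
    | inr h' => exact absurd h'.symm h
  linarith

/-- In every equilibrium of the two-period model (Regions 1–4), social welfare
`SW2 = (1 - e^{-λ0})(v - p - k) + e^{-λ0}(1 - e^{-λ1})(v - p) - (λ0 + λ1)`
equals zero: in each period either the arrival rate is zero or the zero-utility
condition holds. -/
theorem stmt19 (v p k l0 l1 : ℝ) (h0 : 0 ≤ l0) (h1 : 0 ≤ l1)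
    (he0 : l0 = 0 ∨ v - p - k = l0 / (1 - Real.exp (-l0)))
    (he1 : l1 = 0 ∨ v - p = l1 * Real.exp l0 / (1 - Real.exp (-l1))) :
    (1 - Real.exp (-l0)) * (v - p - k) +
      Real.exp (-l0) * (1 - Real.exp (-l1)) * (v - p) - (l0 + l1) = 0 := by
  have hA : (1 - Real.exp (-l0)) * (v - p - k) = l0 := by
    cases he0 with
    | inl h => simp [h]
    | inr h =>
      rcases eq_or_ne l0 0 with h' | h'
      · simp [h']
      · rw [h]; field_simp [aux_ne l0 h0 h']
  have hB : Real.exp (-l0) * (1 - Real.exp (-l1)) * (v - p) = l1 := by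
    cases he1 with
    | inl h => simp [h]
    | inr h =>
      rcases eq_or_ne l1 0 with h' | h'
      · simp [h']
      · rw [h]
        have hne := aux_ne l1 h1 h'
        field_simp
        have he : Real.exp (-l0) * Real.exp l0 = 1 := by
          rw [← Real.exp_add]; simp
        linear_combination he
  rw [hA, hB]; ring
end
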